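/- arXiv:2507.10546 — 2 statements merged into one kernel-verified Lean document; each statement's English description precedes it below -/
import Mathlib

section
/- Let w ∈ ℝ^s, x_i ∈ {−1,1}^s a negative example (f_w(x_i) ≤ 0) with negative-case split weight w̃_i given by w̃_{i,j} = 6·x_{i,j}·𝟙(x_{i,j} ≠ sign(w_j)) on nonzero indices of w. If y ∈ {−1,1}^s is fired by w̃_i (raw output 6) and y ≠ x_i on the nonzero indices of w, then f_w(y) < f_w(x_i) ≤ 0; hence no positive example of w fires w̃_i. -/
open Finset

/-- Maximum of the absolute values of the weights. -/
noncomputable def maxAbs {s : ℕ} (hs : 0 < s) (w : Fin s → ℝ) : ℝ :=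
  Finset.univ.sup' ⟨⟨0, hs⟩, Finset.mem_univ _⟩ fun j => |w j|

/-- Raw output of a conjunctive semi-symbolic node with weights `w` on input `x`. -/
noncomputable def fw {s : ℕ} (hs : 0 < s) (w x : Fin s → ℝ) : ℝ :=
  (∑ j, w j * x j) + (maxAbs hs w - ∑ j, |w j|)

/-!
On the indices where `xi` disagrees with the sign of `w`, the split weight puts `±6` in the
direction of `xi`, so firing (every term of `∑ w̃ⱼ yⱼ` attaining `|w̃ⱼ|`) forces `y` to copy `xi`
there. On the remaining indices `wⱼ xiⱼ = |wⱼ|` is already maximal. Hence `wⱼ yⱼ ≤ wⱼ xiⱼ`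
termwise, strictly where `y` flips a coordinate with `wⱼ ≠ 0`, and the bias of `fw` does not
depend on the input.
-/

lemma Real.mul_sign_self (r : ℝ) : r * Real.sign r = |r| := by
  rcases lt_trichotomy r 0 with hr | rfl | hr
  · rw [Real.sign_of_neg hr, abs_of_neg hr, mul_neg_one]
  · simp
  · rw [Real.sign_of_pos hr, abs_of_pos hr, mul_one]

lemma mul_le_abs_of_abs_le_one {a y : ℝ} (hy : |y| ≤ 1) : a * y ≤ |a| :=
  calc a * y ≤ |a| * |y| := (le_abs_self _).trans (abs_mul a y).le
    _ ≤ |a| := mul_le_of_le_one_right (abs_nonneg a) hy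

lemma mul_eq_abs_of_sum_mul_eq_sum_abs {ι : Type*} [Fintype ι] {a y : ι → ℝ}
    (hy : ∀ j, |y j| ≤ 1) (h : ∑ j, a j * y j = ∑ j, |a j|) (j : ι) : a j * y j = |a j| :=
  (Finset.sum_eq_sum_iff_of_le fun j _ => mul_le_abs_of_abs_le_one (hy j)).mp h j
    (Finset.mem_univ j)

lemma abs_eq_one_of_eq_one_or_eq_neg_one {x : ℝ} (hx : x = 1 ∨ x = -1) : |x| = 1 := by
  rcases hx with rfl | rfl <;> simp

lemma eq_of_mul_mul_eq_abs {c x y : ℝ} (hc : 0 < c) (hx : x = 1 ∨ x = -1)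
    (hy : y = 1 ∨ y = -1) (h : c * x * y = |c * x|) : y = x := by
  rcases hx with rfl | rfl <;> rcases hy with rfl | rfl <;> norm_num [abs_of_pos hc] at h ⊢ <;>
    linarith

lemma mul_le_mul_of_eq_of_ne_sign {w x y : ℝ} (hy : |y| ≤ 1)
    (hagree : w ≠ 0 ∧ x ≠ Real.sign w → y = x) : w * y ≤ w * x := by
  by_cases hw : w ≠ 0 ∧ x ≠ Real.sign w
  · rw [hagree hw]
  · have hx : w * x = |w| := by
      rcases not_and_or.mp hw with hw0 | hxw
      · rw [not_not.mp hw0, zero_mul, abs_zero]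
      · rw [not_not.mp hxw, Real.mul_sign_self]
    exact hx ▸ mul_le_abs_of_abs_le_one hy

lemma mul_lt_mul_of_ne_of_eq_of_ne_sign {w x y : ℝ} (hx : x = 1 ∨ x = -1)
    (hy : y = 1 ∨ y = -1) (hw : w ≠ 0) (hyx : y ≠ x)
    (hagree : w ≠ 0 ∧ x ≠ Real.sign w → y = x) : w * y < w * x := by
  have hxw : x = Real.sign w := by_contra fun h => hyx (hagree ⟨hw, h⟩)
  have hyx' : y = -x := by
    rcases hx with rfl | rfl <;> rcases hy with rfl | rfl <;> norm_num at *
  rw [hyx', mul_neg, hxw, Real.mul_sign_self]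
  linarith [abs_pos.mpr hw]

lemma fw_lt_fw_of_mul_le_of_mul_lt {s : ℕ} (hs : 0 < s) {w x y : Fin s → ℝ}
    (hle : ∀ j, w j * y j ≤ w j * x j) (hlt : ∃ j, w j * y j < w j * x j) :
    fw hs w y < fw hs w x := by
  have : ∑ j, w j * y j < ∑ j, w j * x j :=
    Finset.sum_lt_sum (fun j _ => hle j) (hlt.imp fun j hj => ⟨Finset.mem_univ j, hj⟩)
  unfold fw
  linarith

theorem stmt_12 {s : ℕ} (hs : 0 < s) (w xi y : Fin s → ℝ)
    (hxi : ∀ j, xi j = 1 ∨ xi j = -1) (hy : ∀ j, y j = 1 ∨ y j = -1)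
    (hneg : fw hs w xi ≤ 0)
    (wt : Fin s → ℝ)
    (hwt : ∀ j, wt j = if w j ≠ 0 ∧ xi j ≠ Real.sign (w j) then 6 * xi j else 0)
    (hfire : (∑ j, wt j * y j) + (6 - ∑ j, |wt j|) = 6)
    (hne : ∃ j, w j ≠ 0 ∧ y j ≠ xi j) :
    fw hs w y < fw hs w xi ∧ fw hs w xi ≤ 0 := by
  have habs_y j : |y j| ≤ 1 := (abs_eq_one_of_eq_one_or_eq_neg_one (hy j)).le
  have hfired := mul_eq_abs_of_sum_mul_eq_sum_abs (a := wt) habs_y (by linarith)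
  have hagree j (hj : w j ≠ 0 ∧ xi j ≠ Real.sign (w j)) : y j = xi j :=
    eq_of_mul_mul_eq_abs (c := 6) (by norm_num) (hxi j) (hy j)
      (by simpa only [hwt j, if_pos hj] using hfired j)
  obtain ⟨j₀, hw₀, hyx₀⟩ := hne
  refine ⟨fw_lt_fw_of_mul_le_of_mul_lt hs (fun j => mul_le_mul_of_eq_of_ne_sign (habs_y j)
    (hagree j)) ⟨j₀, ?_⟩, hneg⟩
  exact mul_lt_mul_of_ne_of_eq_of_ne_sign (hxi j₀) (hy j₀) hw₀ hyx₀ (hagree j₀)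
end

section
/- Let w ∈ ℝ^s with nonzero index set J. The map sending a positive example x (with f_w(x) > 0) to its exclusion set E(x) = {j ∈ J : x_j ≠ sign(w_j)} is a bijection between the set of positive example restrictions to J and the family of subsets E ⊆ J with Σ_{j ∈ E} |w_j| < (max_j |w_j|)/2. -/
/-!
On a sign vector `x`, `w j * x j` is `|w j|` or `-|w j|` according as `x j` agrees with
`sign (w j)` or not, so `fw w x = maxAbs w - 2 ∑_{j ∈ E(x)} |w j|` and `x` is positive exactly
when `∑_{j ∈ E(x)} |w j| < maxAbs w / 2`. Conversely `x` is recovered from `E(x)` by flipping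
`sign w` on `E(x)` and putting `1` where `w` vanishes.
-/

open Finset

lemma mul_eq_abs_sub_ite {w x : ℝ} (hx : x = 1 ∨ x = -1) :
    w * x = |w| - 2 * if w ≠ 0 ∧ x ≠ Real.sign w then |w| else 0 := by
  rcases lt_trichotomy w 0 with hw | rfl | hw
  · rcases hx with rfl | rfl
    · simp [Real.sign_of_neg hw, abs_of_neg hw, hw.ne]; norm_num; ring
    · simp [Real.sign_of_neg hw, abs_of_neg hw, hw.ne]
  · simp
  · rcases hx with rfl | rfl
    · simp [Real.sign_of_pos hw, abs_of_pos hw, hw.ne']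
    · simp [Real.sign_of_pos hw, abs_of_pos hw, hw.ne']; norm_num; ring

lemma eq_neg_of_ne_of_eq_one_or_neg_one {x y : ℝ} (hx : x = 1 ∨ x = -1) (hy : y = 1 ∨ y = -1)
    (hxy : x ≠ y) : x = -y := by
  rcases hx with rfl | rfl <;> rcases hy with rfl | rfl <;> norm_num at *

section Exclusion

variable {ι : Type*}

noncomputable def exclusionSet [Fintype ι] (w x : ι → ℝ) : Finset ι :=
  univ.filter fun j => w j ≠ 0 ∧ x j ≠ Real.sign (w j)

lemma mem_exclusionSet [Fintype ι] {w x : ι → ℝ} {j : ι} :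
    j ∈ exclusionSet w x ↔ w j ≠ 0 ∧ x j ≠ Real.sign (w j) := by
  simp [exclusionSet]

lemma sum_mul_eq_sum_abs_sub [Fintype ι] (w x : ι → ℝ) (hx : ∀ j, x j = 1 ∨ x j = -1) :
    ∑ j, w j * x j = ∑ j, |w j| - 2 * ∑ j ∈ exclusionSet w x, |w j| := by
  rw [exclusionSet, sum_filter, mul_sum, ← sum_sub_distrib]
  exact sum_congr rfl fun j _ => mul_eq_abs_sub_ite (hx j)

noncomputable def exampleOfExclusion [DecidableEq ι] (w : ι → ℝ) (E : Finset ι) (j : ι) : ℝ :=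
  if j ∈ E then -Real.sign (w j) else if w j = 0 then 1 else Real.sign (w j)

variable [DecidableEq ι] {w : ι → ℝ} {E : Finset ι}

lemma exampleOfExclusion_eq_one_or_neg_one (hE : ∀ j ∈ E, w j ≠ 0) (j : ι) :
    exampleOfExclusion w E j = 1 ∨ exampleOfExclusion w E j = -1 := by
  unfold exampleOfExclusion
  split_ifs with hj hw
  · rcases Real.sign_apply_eq_of_ne_zero _ (hE j hj) with h | h <;> simp [h]
  · simp
  · exact (Real.sign_apply_eq_of_ne_zero _ hw).symm

lemma exampleOfExclusion_of_eq_zero (hE : ∀ j ∈ E, w j ≠ 0) {j : ι} (hw : w j = 0) :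
    exampleOfExclusion w E j = 1 := by
  have hj : j ∉ E := fun hj => hE j hj hw
  simp [exampleOfExclusion, hj, hw]

lemma exclusionSet_exampleOfExclusion [Fintype ι] (hE : ∀ j ∈ E, w j ≠ 0) :
    exclusionSet w (exampleOfExclusion w E) = E := by
  ext j
  rw [mem_exclusionSet]
  by_cases hj : j ∈ E
  · have hw := hE j hj
    simp only [exampleOfExclusion, hj, if_true, hw, ne_eq, not_false_eq_true, true_and, iff_true]
    rcases Real.sign_apply_eq_of_ne_zero _ hw with h | h <;> rw [h] <;> norm_num
  · simp only [exampleOfExclusion, hj, if_false, iff_false, not_and, not_not]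
    exact fun hw => by simp [hw]

lemma exampleOfExclusion_exclusionSet [Fintype ι] {x : ι → ℝ}
    (hx : ∀ j, x j = 1 ∨ x j = -1) (hz : ∀ j, w j = 0 → x j = 1) :
    exampleOfExclusion w (exclusionSet w x) = x := by
  funext j
  unfold exampleOfExclusion
  split_ifs with hj hw
  · obtain ⟨hw, hne⟩ := mem_exclusionSet.mp hj
    exact (eq_neg_of_ne_of_eq_one_or_neg_one (hx j)
      (Real.sign_apply_eq_of_ne_zero _ hw).symm hne).symm
  · exact (hz j hw).symm
  · by_contra h
    exact hj (mem_exclusionSet.mpr ⟨hw, Ne.symm h⟩)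

end Exclusion

section Node

variable {s : ℕ} (hs : 0 < s) (w : Fin s → ℝ)

lemma fw_eq_maxAbs_sub {x : Fin s → ℝ} (hx : ∀ j, x j = 1 ∨ x j = -1) :
    fw hs w x = maxAbs hs w - 2 * ∑ j ∈ exclusionSet w x, |w j| := by
  rw [fw, sum_mul_eq_sum_abs_sub w x hx]
  ring

lemma fw_pos_iff {x : Fin s → ℝ} (hx : ∀ j, x j = 1 ∨ x j = -1) :
    0 < fw hs w x ↔ ∑ j ∈ exclusionSet w x, |w j| < maxAbs hs w / 2 := by
  rw [fw_eq_maxAbs_sub hs w hx]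
  constructor <;> intro h <;> linarith

/-- Off the support of `w` an input does not affect `fw`, so fixing it to `1` there makes
these the restrictions of positive examples to the support. -/
def positiveExamples : Set (Fin s → ℝ) :=
  {x | (∀ j, x j = 1 ∨ x j = -1) ∧ (∀ j, w j = 0 → x j = 1) ∧ 0 < fw hs w x}

def admissibleExclusions : Set (Finset (Fin s)) :=
  {E | (∀ j ∈ E, w j ≠ 0) ∧ ∑ j ∈ E, |w j| < maxAbs hs w / 2}

noncomputable def exclusionEquiv : positiveExamples hs w ≃ admissibleExclusions hs w where
  toFun x := ⟨exclusionSet w x, fun _ hj => (mem_exclusionSet.mp hj).1,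
    (fw_pos_iff hs w x.2.1).mp x.2.2.2⟩
  invFun E := ⟨exampleOfExclusion w E, exampleOfExclusion_eq_one_or_neg_one E.2.1,
    fun _ => exampleOfExclusion_of_eq_zero E.2.1, by
      rw [fw_pos_iff hs w (exampleOfExclusion_eq_one_or_neg_one E.2.1),
        exclusionSet_exampleOfExclusion E.2.1]
      exact E.2.2⟩
  left_inv x := Subtype.ext (exampleOfExclusion_exclusionSet x.2.1 x.2.2.1)
  right_inv E := Subtype.ext (exclusionSet_exampleOfExclusion E.2.1)

end Node

theorem stmt_15 {s : ℕ} (hs : 0 < s) (w : Fin s → ℝ) :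
    ∃ e : {x : Fin s → ℝ // (∀ j, x j = 1 ∨ x j = -1) ∧
            (∀ j, w j = 0 → x j = 1) ∧ 0 < fw hs w x} ≃
          {E : Finset (Fin s) // (∀ j ∈ E, w j ≠ 0) ∧
            ∑ j ∈ E, |w j| < maxAbs hs w / 2},
      ∀ x, (e x).val =
        Finset.univ.filter (fun j => w j ≠ 0 ∧ x.val j ≠ Real.sign (w j)) :=
  ⟨exclusionEquiv hs w, fun _ => rfl⟩
end
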